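/- There exist η > 0 and C > 0 such that for every fluid model (y, x) and Lebesgue-almost every t ≥ 0 with ‖(y(t), x(t))‖_* ≥ C, the function s ↦ ‖(y(s), x(s))‖_* is differentiable at t and its derivative at t is at most -η. -/

import Mathlib

/-!
Let `a₁ = β/ν₁`, `a₂ = β/ν₂` and `D = a₁ - a₂ > 0`. The coordinates of `u = (y, x)` in the basis
`v₁, v₂` are `α₁ = (y + a₂x)/D` and `α₂ = -x - α₁`, and `ν₁ν₂ = εβ`, `ν₁ + ν₂ = γβ` make them
eigencoordinates of the drift `u ↦ uA`: `α₁(uA) = -ν₁α₁(u)`, `α₂(uA) = -ν₂α₂(u)`. Hence wherever the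
fluid model follows the linear ODE, `‖u‖_*` decays at rate `ν₁‖u‖_* ≥ ν₁` once `‖u‖_* ≥ 1`.
On the boundary `x = -λ/β` with `εy ≥ γλ` the velocity is `(-λ, 0)`, whose coordinates are
`(-λ/D, λ/D)`; there `α₁ ≥ 0 ≥ α₂`, so the derivative of `‖u‖_*` is `-(λ/D)(α₁ - α₂)/‖u‖_* ≤ -λ/D`.
On the rest of the boundary the velocity again equals `uA`. So `C = 1` and `η = min(ν₁, λ/D)` work.
-/

noncomputable def nu1 (β γ ε : ℝ) : ℝ := (γ * β - Real.sqrt (γ^2 * β^2 - 4 * ε * β)) / 2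
noncomputable def nu2 (β γ ε : ℝ) : ℝ := (γ * β + Real.sqrt (γ^2 * β^2 - 4 * ε * β)) / 2

/-- The norm `‖u‖_*`: the Euclidean norm of the coordinates of `u` in the
eigenvector basis `v₁ = (β/ν₁, -1)`, `v₂ = (β/ν₂, -1)`. -/
noncomputable def starNorm (β γ ε : ℝ) (u : ℝ × ℝ) : ℝ :=
  let a1 := β / nu1 β γ ε
  let a2 := β / nu2 β γ ε
  let α1 := (u.1 + a2 * u.2) / (a1 - a2)
  let α2 := -u.2 - α1
  Real.sqrt (α1 ^ 2 + α2 ^ 2)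
open MeasureTheory Set Filter

/-- A fluid model: locally Lipschitz pair `(y, x)` on `[0,∞)` with `x ≥ -λ/β`,
satisfying the fluid ODE a.e. on `[0,∞)`. -/
def IsFluidModel (β γ ε lam : ℝ) (y x : ℝ → ℝ) : Prop :=
  (∀ T : ℝ, 0 < T → ∃ K : NNReal,
      LipschitzOnWith K y (Set.Icc 0 T) ∧ LipschitzOnWith K x (Set.Icc 0 T)) ∧
  (∀ t : ℝ, 0 ≤ t → -lam / β ≤ x t) ∧
  (∀ᵐ t ∂(volume.restrict (Set.Ici (0 : ℝ))),
    ∃ y' x' : ℝ, HasDerivAt y y' t ∧ HasDerivAt x x' t ∧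
      (-lam / β < x t → y' = β * x t ∧ x' = -(γ * β * x t) - ε * y t) ∧
      (x t = -lam / β → y' = -lam ∧ x' = max (γ * lam - ε * y t) 0))

theorem HasDerivAt.sqrt_sq_add_sq {f g : ℝ → ℝ} {f' g' t : ℝ} (hf : HasDerivAt f f' t)
    (hg : HasDerivAt g g' t) (h : f t ^ 2 + g t ^ 2 ≠ 0) :
    HasDerivAt (fun s => √(f s ^ 2 + g s ^ 2))
      ((f t * f' + g t * g') / √(f t ^ 2 + g t ^ 2)) t := by
  have hsum : HasDerivAt (fun s => f s ^ 2 + g s ^ 2) (2 * f t * f' + 2 * g t * g') t :=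
    ((hf.fun_pow 2).fun_add (hg.fun_pow 2)).congr_deriv (by norm_num)
  convert hsum.sqrt h using 1
  field_simp

theorem sqrt_sq_add_sq_le_sub {a b : ℝ} (ha : 0 ≤ a) (hb : b ≤ 0) : √(a ^ 2 + b ^ 2) ≤ a - b :=
  Real.sqrt_le_iff.2 ⟨by linarith, by nlinarith⟩

section Eigenvalues

variable {β γ ε : ℝ}

theorem nu_discriminant_pos (hβ : 0 < β) (hεbound : ε < γ ^ 2 * β / 4) :
    0 < γ ^ 2 * β ^ 2 - 4 * ε * β := by
  nlinarith [mul_pos (sub_pos.2 hεbound) hβ]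

theorem nu1_add_nu2 (β γ ε : ℝ) : nu1 β γ ε + nu2 β γ ε = γ * β := by
  unfold nu1 nu2
  ring

theorem nu1_mul_nu2 (hβ : 0 < β) (hεbound : ε < γ ^ 2 * β / 4) :
    nu1 β γ ε * nu2 β γ ε = ε * β := by
  unfold nu1 nu2
  linear_combination (-1 / 4 : ℝ) * Real.sq_sqrt (nu_discriminant_pos hβ hεbound).le

theorem nu1_lt_nu2 (hβ : 0 < β) (hεbound : ε < γ ^ 2 * β / 4) : nu1 β γ ε < nu2 β γ ε := by
  unfold nu1 nu2
  linarith [Real.sqrt_pos.2 (nu_discriminant_pos hβ hεbound)]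

theorem nu1_pos (hβ : 0 < β) (hγ : 0 < γ) (hε : 0 < ε) : 0 < nu1 β γ ε := by
  have : √(γ ^ 2 * β ^ 2 - 4 * ε * β) < γ * β := by
    rw [Real.sqrt_lt' (mul_pos hγ hβ)]
    nlinarith [mul_pos hε hβ]
  unfold nu1
  linarith

end Eigenvalues

/-- `-det(v₁, v₂)`. -/
noncomputable def starDet (β γ ε : ℝ) : ℝ := β / nu1 β γ ε - β / nu2 β γ ε

noncomputable def starCoord₁ (β γ ε : ℝ) (u : ℝ × ℝ) : ℝ :=
  (u.1 + β / nu2 β γ ε * u.2) / starDet β γ ε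

noncomputable def starCoord₂ (β γ ε : ℝ) (u : ℝ × ℝ) : ℝ := -u.2 - starCoord₁ β γ ε u

noncomputable def starInner (β γ ε : ℝ) (u v : ℝ × ℝ) : ℝ :=
  starCoord₁ β γ ε u * starCoord₁ β γ ε v + starCoord₂ β γ ε u * starCoord₂ β γ ε v

/-- The map `u ↦ uA`. -/
def fluidDrift (β γ ε : ℝ) (u : ℝ × ℝ) : ℝ × ℝ := (β * u.2, -(γ * β * u.2) - ε * u.1)

section StarCoordinates

variable {β γ ε : ℝ}

theorem starNorm_eq (u : ℝ × ℝ) :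
    starNorm β γ ε u = √(starCoord₁ β γ ε u ^ 2 + starCoord₂ β γ ε u ^ 2) := rfl

theorem starNorm_sq (u : ℝ × ℝ) : starNorm β γ ε u ^ 2 = starInner β γ ε u u := by
  rw [starNorm_eq, Real.sq_sqrt (by positivity), starInner]
  ring

theorem starDet_pos (hβ : 0 < β) (hγ : 0 < γ) (hε : 0 < ε) (hεbound : ε < γ ^ 2 * β / 4) :
    0 < starDet β γ ε :=
  sub_pos.2 (div_lt_div_of_pos_left hβ (nu1_pos hβ hγ hε) (nu1_lt_nu2 hβ hεbound))

theorem hasDerivAt_starNorm {y x : ℝ → ℝ} {y' x' t : ℝ} (hy : HasDerivAt y y' t)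
    (hx : HasDerivAt x x' t) (h : starNorm β γ ε (y t, x t) ≠ 0) :
    HasDerivAt (fun s => starNorm β γ ε (y s, x s))
      (starInner β γ ε (y t, x t) (y', x') / starNorm β γ ε (y t, x t)) t := by
  have h₁ : HasDerivAt (fun s => starCoord₁ β γ ε (y s, x s)) (starCoord₁ β γ ε (y', x')) t :=
    (hy.add (hx.const_mul _)).div_const _
  have h₂ : HasDerivAt (fun s => starCoord₂ β γ ε (y s, x s)) (starCoord₂ β γ ε (y', x')) t :=
    hx.neg.sub h₁
  have hsq : starCoord₁ β γ ε (y t, x t) ^ 2 + starCoord₂ β γ ε (y t, x t) ^ 2 ≠ 0 := by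
    rw [starNorm_eq, Real.sqrt_ne_zero'] at h
    exact h.ne'
  exact h₁.sqrt_sq_add_sq h₂ hsq

theorem starCoord₁_fluidDrift (hβ : 0 < β) (hγ : 0 < γ) (hε : 0 < ε)
    (hεbound : ε < γ ^ 2 * β / 4) (u : ℝ × ℝ) :
    starCoord₁ β γ ε (fluidDrift β γ ε u) = -nu1 β γ ε * starCoord₁ β γ ε u := by
  have h₁ := nu1_pos hβ hγ hε
  have h₂ := h₁.trans (nu1_lt_nu2 hβ hεbound)
  have hD := starDet_pos hβ hγ hε hεbound
  unfold starCoord₁ fluidDrift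
  field_simp
  linear_combination (β * u.2) * nu1_add_nu2 β γ ε + u.1 * nu1_mul_nu2 hβ hεbound

theorem starCoord₂_fluidDrift (hβ : 0 < β) (hγ : 0 < γ) (hε : 0 < ε)
    (hεbound : ε < γ ^ 2 * β / 4) (u : ℝ × ℝ) :
    starCoord₂ β γ ε (fluidDrift β γ ε u) = -nu2 β γ ε * starCoord₂ β γ ε u := by
  have h₁ := nu1_pos hβ hγ hε
  have h₂ := h₁.trans (nu1_lt_nu2 hβ hεbound)
  have h₁₂ := sub_pos.2 (nu1_lt_nu2 hβ hεbound)
  rw [starCoord₂, starCoord₁_fluidDrift hβ hγ hε hεbound, starCoord₂]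
  unfold starCoord₁ fluidDrift starDet
  field_simp
  linear_combination (-(β * u.2) * (nu2 β γ ε - nu1 β γ ε)) * nu1_add_nu2 β γ ε
    - u.1 * (nu2 β γ ε - nu1 β γ ε) * nu1_mul_nu2 hβ hεbound

theorem starInner_fluidDrift_le (hβ : 0 < β) (hγ : 0 < γ) (hε : 0 < ε)
    (hεbound : ε < γ ^ 2 * β / 4) (u : ℝ × ℝ) :
    starInner β γ ε u (fluidDrift β γ ε u) ≤ -nu1 β γ ε * starNorm β γ ε u ^ 2 := by
  have hν := nu1_lt_nu2 hβ hεbound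
  rw [starNorm_sq, starInner, starInner, starCoord₁_fluidDrift hβ hγ hε hεbound,
    starCoord₂_fluidDrift hβ hγ hε hεbound]
  nlinarith [mul_nonneg (sub_nonneg.2 hν.le) (sq_nonneg (starCoord₂ β γ ε u))]

theorem div_nu1_add_div_nu2 (hβ : 0 < β) (hγ : 0 < γ) (hε : 0 < ε)
    (hεbound : ε < γ ^ 2 * β / 4) (lam : ℝ) :
    lam / nu1 β γ ε + lam / nu2 β γ ε = γ * lam / ε := by
  have h₁ := nu1_pos hβ hγ hε
  have h₂ := h₁.trans (nu1_lt_nu2 hβ hεbound)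
  field_simp
  linear_combination lam * ε * nu1_add_nu2 β γ ε - lam * γ * nu1_mul_nu2 hβ hεbound

theorem starInner_boundary_le (hβ : 0 < β) (hγ : 0 < γ) (hε : 0 < ε)
    (hεbound : ε < γ ^ 2 * β / 4) {lam y : ℝ} (hlam : 0 < lam) (hy : γ * lam ≤ ε * y) :
    starInner β γ ε (y, -lam / β) (-lam, 0) ≤
      -(lam / starDet β γ ε) * starNorm β γ ε (y, -lam / β) := by
  have hD := starDet_pos hβ hγ hε hεbound
  have hν₁ := nu1_pos hβ hγ hε
  have hν₂ := hν₁.trans (nu1_lt_nu2 hβ hεbound)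
  have hy' : lam / nu1 β γ ε + lam / nu2 β γ ε ≤ y := by
    rw [div_nu1_add_div_nu2 hβ hγ hε hεbound, div_le_iff₀ hε]
    linarith
  have hx₂ : β / nu2 β γ ε * (-lam / β) = -(lam / nu2 β γ ε) := by field_simp
  have hxD : -(-lam / β) * starDet β γ ε = lam / nu1 β γ ε - lam / nu2 β γ ε := by
    unfold starDet
    field_simp
  have hl₁ : 0 ≤ lam / nu1 β γ ε := by positivity
  have hl₂ : 0 ≤ lam / nu2 β γ ε := by positivity
  have h₁ : 0 ≤ starCoord₁ β γ ε (y, -lam / β) := by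
    rw [starCoord₁, hx₂]
    exact div_nonneg (by linarith) hD.le
  have h₂ : starCoord₂ β γ ε (y, -lam / β) ≤ 0 := by
    rw [starCoord₂, starCoord₁, sub_nonpos, le_div_iff₀ hD, hxD, hx₂]
    dsimp only
    linarith
  have hv₁ : starCoord₁ β γ ε (-lam, 0) = -(lam / starDet β γ ε) := by
    simp only [starCoord₁]; ring
  have hv₂ : starCoord₂ β γ ε (-lam, 0) = lam / starDet β γ ε := by
    simp only [starCoord₂, hv₁]; ring
  rw [starInner, hv₁, hv₂, starNorm_eq]
  have hα := sqrt_sq_add_sq_le_sub h₁ h₂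
  have hlD : 0 < lam / starDet β γ ε := div_pos hlam hD
  nlinarith

theorem fluid_velocity_cases (hβ : 0 < β) {lam y x y' x' : ℝ} (hx : -lam / β ≤ x)
    (hint : -lam / β < x → y' = β * x ∧ x' = -(γ * β * x) - ε * y)
    (hbd : x = -lam / β → y' = -lam ∧ x' = max (γ * lam - ε * y) 0) :
    (y', x') = fluidDrift β γ ε (y, x) ∨
      x = -lam / β ∧ γ * lam ≤ ε * y ∧ (y', x') = (-lam, 0) := by
  rcases hx.lt_or_eq with hlt | heq
  · obtain ⟨rfl, rfl⟩ := hint hlt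
    exact Or.inl rfl
  obtain ⟨rfl, rfl⟩ := hbd heq.symm
  rcases le_or_gt (γ * lam) (ε * y) with hle | hlt
  · rw [max_eq_right (by linarith)]
    exact Or.inr ⟨heq.symm, hle, rfl⟩
  · left
    rw [max_eq_left (by linarith), fluidDrift, ← heq]
    ext <;> field_simp

theorem starInner_div_starNorm_le (hβ : 0 < β) (hγ : 0 < γ) (hε : 0 < ε)
    (hεbound : ε < γ ^ 2 * β / 4) {lam : ℝ} (hlam : 0 < lam) {u v : ℝ × ℝ}
    (hN : 1 ≤ starNorm β γ ε u)
    (hv : v = fluidDrift β γ ε u ∨ u.2 = -lam / β ∧ γ * lam ≤ ε * u.1 ∧ v = (-lam, 0)) :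
    starInner β γ ε u v / starNorm β γ ε u ≤ -min (nu1 β γ ε) (lam / starDet β γ ε) := by
  rw [div_le_iff₀ (by linarith)]
  rcases hv with rfl | ⟨hx, hy, rfl⟩
  · have hν := nu1_pos hβ hγ hε
    calc starInner β γ ε u (fluidDrift β γ ε u)
        ≤ -nu1 β γ ε * starNorm β γ ε u ^ 2 := starInner_fluidDrift_le hβ hγ hε hεbound u
      _ ≤ -nu1 β γ ε * starNorm β γ ε u := by nlinarith [le_self_pow₀ hN two_ne_zero]
      _ ≤ -min (nu1 β γ ε) (lam / starDet β γ ε) * starNorm β γ ε u := by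
        gcongr
        exact min_le_left _ _
  · obtain ⟨y, x⟩ := u
    dsimp only at hx hy
    subst hx
    calc starInner β γ ε (y, -lam / β) (-lam, 0)
        ≤ -(lam / starDet β γ ε) * starNorm β γ ε (y, -lam / β) :=
          starInner_boundary_le hβ hγ hε hεbound hlam hy
      _ ≤ -min (nu1 β γ ε) (lam / starDet β γ ε) * starNorm β γ ε (y, -lam / β) := by
        gcongr
        exact min_le_right _ _

end StarCoordinates

/-- Lemma 4.2(iii): far from the origin, the `‖·‖_*`-norm of a
fluid model decreases at least at a constant rate. -/
theorem stmt_4 (β γ ε lam : ℝ) (hβ : 0 < β) (hγ : 0 < γ) (hε : 0 < ε)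
    (hεbound : ε < γ ^ 2 * β / 4) (hlam : 0 < lam) :
    ∃ η C : ℝ, 0 < η ∧ 0 < C ∧
      ∀ y x : ℝ → ℝ, IsFluidModel β γ ε lam y x →
        ∀ᵐ t ∂(volume.restrict (Set.Ici (0 : ℝ))),
          C ≤ starNorm β γ ε (y t, x t) →
            ∃ d : ℝ, HasDerivAt (fun s => starNorm β γ ε (y s, x s)) d t ∧
              d ≤ -η := by
  refine ⟨min (nu1 β γ ε) (lam / starDet β γ ε), 1,
    lt_min (nu1_pos hβ hγ hε) (div_pos hlam (starDet_pos hβ hγ hε hεbound)), one_pos, ?_⟩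
  rintro y x ⟨-, hge, hae⟩
  filter_upwards [hae, ae_restrict_mem measurableSet_Ici] with t ⟨y', x', hy, hx, hint, hbd⟩ ht hN
  have hv := fluid_velocity_cases (γ := γ) (ε := ε) hβ (hge t ht) hint hbd
  exact ⟨_, hasDerivAt_starNorm hy hx (by linarith),
    starInner_div_starNorm_le hβ hγ hε hεbound hlam hN hv⟩
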